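/- Let U = (1/√2)(I ⊗ I - i Z_N ⊗ Z_M) acting on ℂ^{2N} ⊗ ℂ^{2M}. Then U is a symmetric unitary (Uᵀ = U, U*U = I) and for all X ∈ M_{2N}(ℂ) and Y ∈ M_{2M}(ℂ), U*(X^♯ ⊗ Y^♯)U = (U*(X ⊗ Y)U)ᵀ. In other words, the tensor product of two dual operations is conjugate via U to the transpose. -/

import Mathlib

open Matrix Kronecker

noncomputable def Zmat (K : ℕ) : Matrix (Fin K ⊕ Fin K) (Fin K ⊕ Fin K) ℂ :=
  Matrix.fromBlocks 0 1 (-1) 0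

noncomputable def dual {K : ℕ} (X : Matrix (Fin K ⊕ Fin K) (Fin K ⊕ Fin K) ℂ) :
    Matrix (Fin K ⊕ Fin K) (Fin K ⊕ Fin K) ℂ :=
  -(Zmat K) * Xᵀ * (Zmat K)

/-!
Put `Z = Z_N ⊗ Z_M` and `W = i Z`. As `Z_K` is real, antisymmetric and squares to `-1`, `Z` is
real, symmetric and squares to `1`; hence `W` is symmetric, anti-Hermitian, `W² = -1`, and
`U = (1 - W)/√2`, `U* = (1 + W)/√2`. Moreover `X^♯ ⊗ Y^♯ = Z (X ⊗ Y)ᵀ Z = -W (X ⊗ Y)ᵀ W`, and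
the identities `(1 + W) W = -(1 - W)`, `W (1 - W) = 1 + W` turn `(1 + W)(-W Aᵀ W)(1 - W)` into
`(1 - W) Aᵀ (1 + W) = ((1 + W) A (1 - W))ᵀ`.
-/

lemma neg_kronecker_neg {α l m n p : Type*} [Ring α] (A : Matrix l m α) (B : Matrix n p α) :
    (-A) ⊗ₖ (-B) = A ⊗ₖ B := by
  ext i j
  simp

section SquareRootOfNegOne

variable {R : Type*} [Ring R] {w : R}

lemma one_add_mul_one_sub_of_mul_self_eq_neg_one (hw : w * w = -1) :
    (1 + w) * (1 - w) = 2 := by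
  calc (1 + w) * (1 - w) = 1 - w * w := by noncomm_ring
    _ = 2 := by rw [hw, sub_neg_eq_add, one_add_one_eq_two]

lemma one_add_mul_conj_mul_one_sub_of_mul_self_eq_neg_one (hw : w * w = -1) (a : R) :
    (1 + w) * (w * a * w) * (1 - w) = -((1 - w) * a * (1 + w)) := by
  have hleft : (1 + w) * w = -(1 - w) := by
    rw [add_mul, one_mul, hw, neg_sub, sub_eq_add_neg]
  have hright : w * (1 - w) = 1 + w := by
    rw [mul_sub, mul_one, hw, sub_neg_eq_add, add_comm]
  calc (1 + w) * (w * a * w) * (1 - w) = ((1 + w) * w) * a * (w * (1 - w)) := by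
        simp only [mul_assoc]
    _ = -((1 - w) * a * (1 + w)) := by rw [hleft, hright, neg_mul, neg_mul]

end SquareRootOfNegOne

lemma Matrix.transpose_one_add_mul_mul_one_sub {n R : Type*} [Fintype n] [DecidableEq n]
    [CommRing R] {W : Matrix n n R} (hW : W * W = -1) (hWt : Wᵀ = W) (A : Matrix n n R) :
    ((1 + W) * A * (1 - W))ᵀ = (1 + W) * -(W * Aᵀ * W) * (1 - W) := by
  rw [mul_neg, neg_mul, one_add_mul_conj_mul_one_sub_of_mul_self_eq_neg_one hW, neg_neg,
    transpose_mul, transpose_mul, transpose_sub, transpose_add, transpose_one, hWt, mul_assoc]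

lemma Zmat_transpose (K : ℕ) : (Zmat K)ᵀ = -Zmat K := by
  simp [Zmat, fromBlocks_transpose, fromBlocks_neg]

lemma Zmat_conjTranspose (K : ℕ) : (Zmat K)ᴴ = -Zmat K := by
  simp [Zmat, fromBlocks_conjTranspose, fromBlocks_neg]

lemma Zmat_mul_self (K : ℕ) : Zmat K * Zmat K = -1 := by
  simp [Zmat, fromBlocks_multiply, ← fromBlocks_one, fromBlocks_neg]

section KroneckerZmat

variable (N M : ℕ)

lemma Zmat_kronecker_transpose : (Zmat N ⊗ₖ Zmat M)ᵀ = Zmat N ⊗ₖ Zmat M := by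
  rw [← kroneckerMap_transpose, Zmat_transpose, Zmat_transpose, neg_kronecker_neg]

lemma Zmat_kronecker_conjTranspose : (Zmat N ⊗ₖ Zmat M)ᴴ = Zmat N ⊗ₖ Zmat M := by
  rw [conjTranspose_kronecker, Zmat_conjTranspose, Zmat_conjTranspose, neg_kronecker_neg]

lemma Zmat_kronecker_mul_self : (Zmat N ⊗ₖ Zmat M) * (Zmat N ⊗ₖ Zmat M) = 1 := by
  rw [← mul_kronecker_mul, Zmat_mul_self, Zmat_mul_self, neg_kronecker_neg, one_kronecker_one]

variable {N M}

lemma dual_kronecker_dual (X : Matrix (Fin N ⊕ Fin N) (Fin N ⊕ Fin N) ℂ)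
    (Y : Matrix (Fin M ⊕ Fin M) (Fin M ⊕ Fin M) ℂ) :
    dual X ⊗ₖ dual Y = (Zmat N ⊗ₖ Zmat M) * (X ⊗ₖ Y)ᵀ * (Zmat N ⊗ₖ Zmat M) := by
  rw [dual, dual, mul_kronecker_mul, mul_kronecker_mul, neg_kronecker_neg, kroneckerMap_transpose]

end KroneckerZmat

theorem tensor_of_duals_is_transpose {N M : ℕ} :
    let U : Matrix ((Fin N ⊕ Fin N) × (Fin M ⊕ Fin M)) ((Fin N ⊕ Fin N) × (Fin M ⊕ Fin M)) ℂ :=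
      ((Real.sqrt 2 : ℂ)⁻¹) • ((1 : Matrix _ _ ℂ) ⊗ₖ (1 : Matrix _ _ ℂ)
        - Complex.I • (Zmat N ⊗ₖ Zmat M))
    Uᵀ = U ∧ Uᴴ * U = 1 ∧
    ∀ (X : Matrix (Fin N ⊕ Fin N) (Fin N ⊕ Fin N) ℂ)
      (Y : Matrix (Fin M ⊕ Fin M) (Fin M ⊕ Fin M) ℂ),
      Uᴴ * (dual X ⊗ₖ dual Y) * U = (Uᴴ * (X ⊗ₖ Y) * U)ᵀ := by
  intro U
  set Z := Zmat N ⊗ₖ Zmat M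
  set W := Complex.I • Z
  have hW : W * W = -1 := by
    rw [smul_mul_smul_comm, Complex.I_mul_I, Zmat_kronecker_mul_self, neg_one_smul]
  have hWt : Wᵀ = W := by rw [transpose_smul, Zmat_kronecker_transpose]
  have hWZ : ∀ A, -(W * A * W) = Z * A * Z := fun A => by
    rw [smul_mul_assoc, smul_mul_assoc, mul_smul_comm, smul_smul, Complex.I_mul_I, neg_one_smul,
      neg_neg]
  set c : ℂ := (Real.sqrt 2 : ℂ)⁻¹
  have hc_star : star c = c := by simp [c]
  have hc : c * c = 2⁻¹ := by
    rw [← mul_inv, ← Complex.ofReal_mul, Real.mul_self_sqrt zero_le_two, Complex.ofReal_ofNat]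
  have hU : U = c • (1 - W) := by rw [← one_kronecker_one]
  have hUh : Uᴴ = c • (1 + W) := by
    rw [hU, conjTranspose_smul, conjTranspose_sub, conjTranspose_one, conjTranspose_smul,
      Zmat_kronecker_conjTranspose, hc_star, Complex.star_def, Complex.conj_I, neg_smul,
      sub_neg_eq_add]
  have hconj : ∀ A, Uᴴ * A * U = (c * c) • ((1 + W) * A * (1 - W)) := fun A => by
    rw [hUh, hU, smul_mul_assoc, smul_mul_smul_comm]
  refine ⟨?_, ?_, fun X Y => ?_⟩
  · rw [hU, transpose_smul, transpose_sub, transpose_one, hWt]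
  · rw [← mul_one Uᴴ, hconj, mul_one, one_add_mul_one_sub_of_mul_self_eq_neg_one hW, hc,
      inv_smul_eq_iff₀ two_ne_zero, two_smul, one_add_one_eq_two]
  · rw [hconj, hconj, transpose_smul, transpose_one_add_mul_mul_one_sub hW hWt,
      dual_kronecker_dual, hWZ]
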